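/- Let Δ be a theory (set of graded attribute implications in a finite set Y over a complete residuated lattice L with hedge ⋆) and let Γ result from Δ by replacing a formula A ⇒ B ∈ Δ by A ∪ (S(C,A)⋆ ⊗ D) ⇒ B, where C ⇒ D is another formula in Δ. Then Mod*(Δ) = Mod*(Γ), i.e., Δ and Γ are semantically equivalent. -/
import Mathlib


/-- A (complete) residuated lattice: a complete lattice with a commutative
monoid operation `mul` with unit `⊤` and residuum `resid` satisfying adjointness. -/
class ResLat (L : Type*) extends CompleteLattice L where
  mul : L → L → L
  resid : L → L → L
  mul_comm : ∀ a b : L, mul a b = mul b a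
  mul_assoc : ∀ a b c : L, mul (mul a b) c = mul a (mul b c)
  mul_top : ∀ a : L, mul a ⊤ = a
  adjoint : ∀ a b c : L, mul a b ≤ c ↔ a ≤ resid b c

open ResLat

/-- Subsethood degree `S(A,B) = ⨅ y, A y → B y`. -/
def Sdeg {L Y : Type*} [ResLat L] (A B : Y → L) : L := ⨅ y, resid (A y) (B y)

/-- Idempotent truth-stressing hedge. -/
def IsHedge {L : Type*} [ResLat L] (star : L → L) : Prop :=
  star ⊤ = ⊤ ∧ (∀ a : L, star a ≤ a) ∧
  (∀ a b : L, star (resid a b) ≤ resid (star a) (star b)) ∧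
  (∀ a : L, star (star a) = star a)

/-- Models of a theory (a set of graded attribute implications). -/
def Models {L Y : Type*} [ResLat L] (star : L → L)
    (T : Set ((Y → L) × (Y → L))) : Set (Y → L) :=
  {M | ∀ p ∈ T, star (Sdeg p.1 M) ≤ Sdeg p.2 M}

section Aux
variable {L : Type*} [ResLat L]

lemma mul_resid_le (a b : L) : mul (resid a b) a ≤ b :=
  (adjoint _ _ _).2 le_rfl

lemma rmul_le_rmul {a a' b b' : L} (ha : a ≤ a') (hb : b ≤ b') :
    mul a b ≤ mul a' b' := by
  have h1 : mul a b ≤ mul a' b := by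
    rw [adjoint]
    exact le_trans ha ((adjoint _ _ _).1 le_rfl)
  have h2 : mul a' b ≤ mul a' b' := by
    rw [ResLat.mul_comm a' b, ResLat.mul_comm a' b', adjoint]
    exact le_trans hb ((adjoint _ _ _).1 le_rfl)
  exact le_trans h1 h2

lemma le_of_top_le_resid {a b : L} (h : (⊤ : L) ≤ resid a b) : a ≤ b := by
  have := (adjoint (⊤ : L) a b).2 h
  rwa [ResLat.mul_comm, mul_top] at this

lemma top_le_resid_of_le {a b : L} (h : a ≤ b) : (⊤ : L) ≤ resid a b := by
  rw [← adjoint, ResLat.mul_comm, mul_top]; exact h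

lemma star_mono {star : L → L} (hs : IsHedge star) {a b : L} (h : a ≤ b) :
    star a ≤ star b := by
  obtain ⟨htop, hle, hres, _⟩ := hs
  have h1 : (⊤ : L) ≤ star (resid a b) := by
    rw [← htop]
    have : (⊤ : L) ≤ resid a b := top_le_resid_of_le h
    calc star ⊤ = star ⊤ := rfl
    _ ≤ star (resid a b) := by
        -- need monotonicity... avoid circularity: resid a b = ⊤
        have : resid a b = ⊤ := le_antisymm le_top (top_le_resid_of_le h)
        rw [this]
  have h2 := hres a b
  have : (⊤ : L) ≤ resid (star a) (star b) := le_trans h1 h2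
  exact le_of_top_le_resid this

lemma star_mul_le {star : L → L} (hs : IsHedge star) (a b : L) :
    mul (star a) (star b) ≤ star (mul a b) := by
  have h1 : a ≤ resid b (mul a b) := (adjoint _ _ _).1 le_rfl
  have h2 : star a ≤ star (resid b (mul a b)) := star_mono hs h1
  have h3 := hs.2.2.1 b (mul a b)
  rw [adjoint]
  exact le_trans h2 h3

lemma Sdeg_le {Y : Type*} (A M : Y → L) (y : Y) : Sdeg A M ≤ resid (A y) (M y) :=
  iInf_le _ y

lemma Sdeg_trans {Y : Type*} (A B M : Y → L) :
    mul (Sdeg A B) (Sdeg B M) ≤ Sdeg A M := by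
  apply le_iInf; intro y
  rw [← adjoint]
  have h1 : mul (mul (Sdeg A B) (Sdeg B M)) (A y)
      = mul (Sdeg B M) (mul (Sdeg A B) (A y)) := by
    rw [ResLat.mul_comm (Sdeg A B) (Sdeg B M), ResLat.mul_assoc]
  rw [h1]
  have h2 : mul (Sdeg A B) (A y) ≤ B y :=
    le_trans (rmul_le_rmul (Sdeg_le A B y) le_rfl) (mul_resid_le _ _)
  calc mul (Sdeg B M) (mul (Sdeg A B) (A y))
      ≤ mul (Sdeg B M) (B y) := rmul_le_rmul le_rfl h2
    _ ≤ M y := le_trans (rmul_le_rmul (Sdeg_le B M y) le_rfl) (mul_resid_le _ _)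

lemma mul_sup_le {a b c x : L} (hb : mul a b ≤ x) (hc : mul a c ≤ x) :
    mul a (b ⊔ c) ≤ x := by
  rw [ResLat.mul_comm, adjoint] at hb hc ⊢
  exact sup_le hb hc

end Aux

theorem reduction_preserves_models {L Y : Type*} [ResLat L] [Fintype Y]
    (star : L → L) (hs : IsHedge star)
    (Δ Γ : Set ((Y → L) × (Y → L))) (A B C D : Y → L)
    (hAB : (A, B) ∈ Δ) (hCD : (C, D) ∈ Δ) (hne : (A, B) ≠ (C, D))
    (hΓ : Γ = (Δ \ {(A, B)}) ∪
      {((fun y => A y ⊔ mul (star (Sdeg C A)) (D y)), B)}) :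
    Models star Δ = Models star Γ := by
  obtain ⟨htop, hle, hres, hidem⟩ := hs
  set A' : Y → L := fun y => A y ⊔ mul (star (Sdeg C A)) (D y) with hA'
  -- A ≤ A' pointwise, hence Sdeg A' M ≤ Sdeg A M
  have hA'A : ∀ M : Y → L, Sdeg A' M ≤ Sdeg A M := by
    intro M
    apply le_iInf; intro y
    refine le_trans (Sdeg_le A' M y) ?_
    rw [← adjoint]
    have hAA' : A y ≤ A' y := le_sup_left
    exact le_trans (rmul_le_rmul le_rfl hAA') (mul_resid_le _ _)
  -- key: if star(Sdeg C M) ≤ Sdeg D M then star (Sdeg A M) ≤ Sdeg A' M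
  have hkey : ∀ M : Y → L, star (Sdeg C M) ≤ Sdeg D M →
      star (Sdeg A M) ≤ Sdeg A' M := by
    intro M hCDM
    apply le_iInf; intro y
    rw [← adjoint]
    show mul (star (Sdeg A M)) (A y ⊔ mul (star (Sdeg C A)) (D y)) ≤ M y
    apply mul_sup_le
    · -- star (Sdeg A M) ⊗ A y ≤ M y
      calc mul (star (Sdeg A M)) (A y)
          ≤ mul (resid (A y) (M y)) (A y) :=
            rmul_le_rmul (le_trans (hle _) (Sdeg_le A M y)) le_rfl
        _ ≤ M y := mul_resid_le _ _
    · -- star (Sdeg A M) ⊗ (star (Sdeg C A) ⊗ D y) ≤ M y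
      have h1 : mul (star (Sdeg C A)) (star (Sdeg A M)) ≤ Sdeg D M := by
        calc mul (star (Sdeg C A)) (star (Sdeg A M))
            ≤ star (mul (Sdeg C A) (Sdeg A M)) :=
              star_mul_le ⟨htop, hle, hres, hidem⟩ _ _
          _ ≤ star (Sdeg C M) :=
              star_mono ⟨htop, hle, hres, hidem⟩ (Sdeg_trans C A M)
          _ ≤ Sdeg D M := hCDM
      have h2 : mul (star (Sdeg A M)) (mul (star (Sdeg C A)) (D y))
          = mul (mul (star (Sdeg C A)) (star (Sdeg A M))) (D y) := by
        rw [← ResLat.mul_assoc, ResLat.mul_comm (star (Sdeg A M)) (star (Sdeg C A))]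
      rw [h2]
      calc mul (mul (star (Sdeg C A)) (star (Sdeg A M))) (D y)
          ≤ mul (Sdeg D M) (D y) := rmul_le_rmul h1 le_rfl
        _ ≤ mul (resid (D y) (M y)) (D y) := rmul_le_rmul (Sdeg_le D M y) le_rfl
        _ ≤ M y := mul_resid_le _ _
  ext M
  constructor
  · intro hM p hp
    rw [hΓ] at hp
    rcases hp with hp | hp
    · exact hM p hp.1
    · rcases hp with rfl
      have hAM : star (Sdeg A M) ≤ Sdeg B M := hM (A, B) hAB
      calc star (Sdeg A' M) ≤ star (Sdeg A M) :=
            star_mono ⟨htop, hle, hres, hidem⟩ (hA'A M)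
        _ ≤ Sdeg B M := hAM
  · intro hM p hp
    by_cases hpAB : p = (A, B)
    · subst hpAB
      have hCDM : star (Sdeg C M) ≤ Sdeg D M := by
        apply hM (C, D)
        rw [hΓ]
        exact Or.inl ⟨hCD, fun h => hne (by simpa using h.symm)⟩
      have hnew : star (Sdeg A' M) ≤ Sdeg B M := by
        apply hM (A', B)
        rw [hΓ]
        exact Or.inr rfl
      have h1 : star (Sdeg A M) ≤ Sdeg A' M := hkey M hCDM
      calc star (Sdeg A M) = star (star (Sdeg A M)) := (hidem _).symm
        _ ≤ star (Sdeg A' M) := star_mono ⟨htop, hle, hres, hidem⟩ h1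
        _ ≤ Sdeg B M := hnew
    · exact hM p (by rw [hΓ]; exact Or.inl ⟨hp, hpAB⟩)
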